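/- Let p be an odd prime and suppose L_p is embedded in a harmonic matroid M. Then for all i,j ∈ Z_p and all k ∈ Z_p with k ≠ 0, the set ⟨j,-1,i⟩ ∪ ⟨1,0,k^{-1}⟩ has rank 3 in M. -/

import Mathlib

open Set

namespace HarmonicPaper

variable {α : Type*}

/-- Extended rank of a set in a matroid: supremum of cardinalities of independent subsets. -/
noncomputable def eRk (M : Matroid α) (S : Set α) : ℕ∞ :=
  ⨆ I ∈ {I : Set α | M.Indep I ∧ I ⊆ S}, I.encard

/-- A set of points is collinear if it has rank at most 2. -/
def Collin (M : Matroid α) (S : Set α) : Prop := eRk M S ≤ 2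

/-- The six collinear triples of the non-Fano configuration on `y,x,z,o,q,r,s`. -/
def nonFanoLines (y x z o q r s : α) : Set (Set α) :=
  {{y, x, z}, {y, o, q}, {y, r, s}, {z, o, s}, {z, q, r}, {x, q, s}}

/-- `HP M y x z o q r s` : the restriction of `M` to the seven pairwise distinct points
`y,x,z,o,q,r,s` is a simple rank-3 matroid whose collinear triples are exactly those of the
non-Fano matroid `F₇⁻`, or exactly those together with `{x,o,r}` (the Fano matroid `F₇`). -/
def HP (M : Matroid α) (y x z o q r s : α) : Prop :=
  List.Pairwise (· ≠ ·) [y, x, z, o, q, r, s] ∧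
  ({y, x, z, o, q, r, s} : Set α) ⊆ M.E ∧
  eRk M {y, x, z, o, q, r, s} = 3 ∧
  (∀ a ∈ ({y, x, z, o, q, r, s} : Set α), ∀ b ∈ ({y, x, z, o, q, r, s} : Set α),
    a ≠ b → eRk M {a, b} = 2) ∧
  ((∀ a ∈ ({y, x, z, o, q, r, s} : Set α), ∀ b ∈ ({y, x, z, o, q, r, s} : Set α),
      ∀ c ∈ ({y, x, z, o, q, r, s} : Set α), a ≠ b → a ≠ c → b ≠ c →
      (Collin M {a, b, c} ↔ ({a, b, c} : Set α) ∈ nonFanoLines y x z o q r s)) ∨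
   (∀ a ∈ ({y, x, z, o, q, r, s} : Set α), ∀ b ∈ ({y, x, z, o, q, r, s} : Set α),
      ∀ c ∈ ({y, x, z, o, q, r, s} : Set α), a ≠ b → a ≠ c → b ≠ c →
      (Collin M {a, b, c} ↔
        ({a, b, c} : Set α) ∈ insert {x, o, r} (nonFanoLines y x z o q r s))))

/-- `Hc M y z x x'` : `x'` is a harmonic conjugate of `x` with respect to `y` and `z`. -/
def Hc (M : Matroid α) (y z x x' : α) : Prop :=
  ∃ o q r s, HP M y x z o q r s ∧ M.closure {y, z} ∩ M.closure {o, r} = {x'}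

/-- A matroid is harmonic if every harmonic configuration `HP` yields a (unique) harmonic
conjugate, which moreover depends only on `x, y, z` and not on the choice of `o,q,r,s`. -/
def IsHarmonic (M : Matroid α) : Prop :=
  (∀ y x z o q r s, HP M y x z o q r s →
    ∃ x', M.closure {y, z} ∩ M.closure {o, r} = {x'}) ∧
  (∀ y x z o q r s o' q' r' s', HP M y x z o q r s → HP M y x z o' q' r' s' →
    M.closure {y, z} ∩ M.closure {o, r} = M.closure {y, z} ∩ M.closure {o', r'})

/-- One step of harmonic closure. -/
def hStep (M : Matroid α) (S : Set α) : Set α :=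
  S ∪ {x | ∃ a ∈ S, ∃ b ∈ S, ∃ c ∈ S, Hc M a c b x}

/-- Iterated harmonic closure steps. -/
def hIter (M : Matroid α) : ℕ → Set α → Set α
  | 0, S => S
  | n + 1, S => hStep M (hIter M n S)

/-- The harmonic closure `h^∞(S)`. -/
def hCl (M : Matroid α) (S : Set α) : Set α := ⋃ n, hIter M n S

end HarmonicPaper
namespace HarmonicPaper

variable {α : Type*}

/-- The points of the matroid `L_p`: `A i = [0,i,1]`, `B i = [1,i,1]`, `C i = [1,i,0]`,
and `V = [0,1,0]`. -/
inductive LpPoint (p : ℕ) : Type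
  | A : ZMod p → LpPoint p
  | B : ZMod p → LpPoint p
  | C : ZMod p → LpPoint p
  | V : LpPoint p

open LpPoint

/-- The lines (maximal collinear sets of size ≥ 3) of `L_p`:
`⟨1,0,0⟩_p`, `⟨1,0,-1⟩_p`, `⟨0,0,1⟩_p`, and `⟨j,-1,i⟩_p = {[0,i,1],[1,i+j,1],[1,j,0]}`. -/
def LpLines (p : ℕ) : Set (Set (LpPoint p)) :=
  {S | S = {x | ∃ i, x = A i} ∪ {V} ∨ S = {x | ∃ i, x = B i} ∪ {V} ∨
       S = {x | ∃ i, x = C i} ∪ {V} ∨ ∃ i j, S = {A i, B (i + j), C j}}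

/-- Independence in the rank-3 simple matroid `L_p`: any set of at most two points is
independent, and a three-point set is independent iff it lies on no line. -/
def LpIndep (p : ℕ) (S : Set (LpPoint p)) : Prop :=
  S.encard ≤ 2 ∨ (S.encard = 3 ∧ ∀ L ∈ LpLines p, ¬ S ⊆ L)

/-- An embedding of `L_p` in the matroid `M`: an injection of the ground set of `L_p` into
the points of `M` under which independence is preserved and reflected. -/
def IsLpEmbedding (p : ℕ) (M : Matroid α) (f : LpPoint p → α) : Prop :=
  Function.Injective f ∧ Set.range f ⊆ M.E ∧
  ∀ S : Set (LpPoint p), LpIndep p S ↔ M.Indep (f '' S)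

/-- `⟨j,-1,i⟩ := h^∞(⟨j,-1,i⟩_p)`, the harmonic closure in `M` of the line
`{[0,i,1], [1,i+j,1], [1,j,0]}` of `L_p`. -/
def lineJI {p : ℕ} (M : Matroid α) (f : LpPoint p → α) (j i : ZMod p) : Set α :=
  hCl M (f '' {A i, B (i + j), C j})

/-- The family of points `[1,s,-k]` (`g s k` denotes `[1,s,-k]`) produced by the key lemma:
it agrees with the like-named points `[1,s,0]` and `[1,s,1]` of `L_p` and satisfies
properties (i) and (ii) of the key lemma. -/
def IsKeyFamily {p : ℕ} (M : Matroid α) (f : LpPoint p → α)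
    (g : ZMod p → ZMod p → α) : Prop :=
  (∀ s, g s 0 = f (C s)) ∧ (∀ s, g s (-1) = f (B s)) ∧
  (∀ k i j : ZMod p, (⋂ t : ZMod p, lineJI M f (j + k * t) (i + t)) = {g (j - k * i) k}) ∧
  (∀ k i j t : ZMod p, Collin M {f (A (i + t)), f (C (j + k * t)), g (j - k * i) k})

/-- `C(j,i) = {[0,i,1]} ∪ {[1,j-ki,-k] : k ∈ Z_p}`. -/
def cSet {p : ℕ} (f : LpPoint p → α) (g : ZMod p → ZMod p → α) (j i : ZMod p) : Set α :=
  insert (f (A i)) {x | ∃ k : ZMod p, x = g (j - k * i) k}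

/-- The point set `P = {[1,s,-k]} ∪ {[0,i,1]} ∪ {[0,1,0]}`. -/
def pSet {p : ℕ} (f : LpPoint p → α) (g : ZMod p → ZMod p → α) : Set α :=
  {x | ∃ s k, x = g s k} ∪ {x | ∃ i, x = f (A i)} ∪ {f V}

/-- The line family `𝓛₁ = {⟨0,0,1⟩} ∪ {⟨1,0,k⟩ : k ∈ Z_p}`, where
`⟨0,0,1⟩ = {[1,t,0] : t} ∪ {[0,1,0]}`, `⟨1,0,0⟩ = {[0,t,1] : t} ∪ {[0,1,0]}` and
`⟨1,0,k⟩ = {[1,t,-k⁻¹] : t} ∪ {[0,1,0]}` for `k ≠ 0`. -/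
def lFam1 {p : ℕ} [Fact p.Prime] (f : LpPoint p → α) (g : ZMod p → ZMod p → α) :
    Set (Set α) :=
  {S | S = {x | ∃ t, x = f (C t)} ∪ {f V} ∨
       S = {x | ∃ t, x = f (A t)} ∪ {f V} ∨
       ∃ k : ZMod p, k ≠ 0 ∧ S = {x | ∃ t, x = g t k⁻¹} ∪ {f V}}

/-- The line family `𝓛₂ = {C(j,i) : i,j ∈ Z_p}`. -/
def lFam2 {p : ℕ} (f : LpPoint p → α) (g : ZMod p → ZMod p → α) : Set (Set α) :=
  {S | ∃ i j : ZMod p, S = cSet f g j i}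

/-- The line set `𝓛 = 𝓛₁ ∪ 𝓛₂`. -/
def lFam {p : ℕ} [Fact p.Prime] (f : LpPoint p → α) (g : ZMod p → ZMod p → α) :
    Set (Set α) :=
  lFam1 f g ∪ lFam2 f g

end HarmonicPaper

namespace HarmonicPaper
open LpPoint

/-! Harmonic conjugates of points on a line stay on that line, so the harmonic closure of a line
of `L_p` stays in the matroid closure of `L_p`, which is the plane spanned by `[0,0,1]`, `[1,0,0]`
and `[0,1,0]`. By the key lemma each `[1,s,-k]` lies on `⟨s,-1,0⟩`, so the whole set lies in that
plane and has rank at most `3`; it contains the independent triple `[0,i,1]`, `[1,i+j,1]`,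
`[0,1,0]`. -/

lemma eRk_eq_matroid_eRk (M : Matroid α) (S : Set α) : eRk M S = M.eRk S :=
  le_antisymm (iSup₂_le fun _ hI ↦ hI.1.encard_le_eRk_of_subset hI.2)
    (Matroid.eRk_le_iff.2 fun I hIS hI ↦ le_iSup₂ (f := fun J (_ : M.Indep J ∧ J ⊆ S) ↦ J.encard)
      I ⟨hI, hIS⟩)

lemma hCl_subset_closure {M : Matroid α} {S X : Set α} (hS : S ⊆ M.closure X) :
    hCl M S ⊆ M.closure X := by
  refine iUnion_subset fun n ↦ ?_
  induction n with
  | zero => exact hS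
  | succ n ih =>
    rintro x (hx | ⟨a, ha, _, _, c, hc, _, _, _, _, _, hx⟩)
    · exact ih hx
    · have hxac : x ∈ M.closure {a, c} := (hx.ge (mem_singleton x)).1
      exact M.closure_subset_closure_of_subset_closure (pair_subset (ih ha) (ih hc)) hxac

namespace IsLpEmbedding

variable {p : ℕ} {M : Matroid α} {f : LpPoint p → α}

lemma mem_closure_of_mem_line (hf : IsLpEmbedding p M f) {L : Set (LpPoint p)}
    (hL : L ∈ LpLines p) {u v w : LpPoint p} (hu : u ∈ L) (hv : v ∈ L) (hw : w ∈ L)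
    (huv : u ≠ v) : f w ∈ M.closure {f u, f v} := by
  have hpair : M.Indep (f '' {u, v}) := (hf.2.2 _).1 (Or.inl (encard_pair huv).le)
  rw [image_pair] at hpair
  refine hpair.mem_closure_iff'.2 ⟨hf.2.1 ⟨w, rfl⟩, fun hind ↦ ?_⟩
  by_contra hfw
  have hwuv : w ∉ ({u, v} : Set (LpPoint p)) := by
    rintro (rfl | rfl) <;> simp at hfw
  rw [← image_pair, ← image_insert_eq, ← hf.2.2] at hind
  rcases hind with hcard | ⟨-, hnot⟩
  · rw [encard_insert_of_notMem hwuv, encard_pair huv] at hcard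
    exact absurd hcard (by decide)
  · exact hnot L hL (insert_subset hw (pair_subset hu hv))

lemma range_subset_closure (hf : IsLpEmbedding p M f) :
    range f ⊆ M.closure {f (A 0), f (C 0), f V} := by
  set X := M.closure {f (A 0), f (C 0), f V}
  have hbase : ({f (A 0), f (C 0), f V} : Set α) ⊆ X :=
    M.subset_closure _ (by rintro x (rfl | rfl | rfl) <;> exact hf.2.1 (mem_range_self _))
  have hA (t : ZMod p) : f (A t) ∈ X :=
    M.closure_subset_closure (pair_subset (by simp) (by simp))
      (hf.mem_closure_of_mem_line (L := {x | ∃ i, x = A i} ∪ {V}) (Or.inl rfl)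
        (Or.inl ⟨0, rfl⟩) (Or.inr rfl) (Or.inl ⟨t, rfl⟩) (by simp))
  have hC (t : ZMod p) : f (C t) ∈ X :=
    M.closure_subset_closure (pair_subset (by simp) (by simp))
      (hf.mem_closure_of_mem_line (L := {x | ∃ i, x = C i} ∪ {V}) (Or.inr (Or.inr (Or.inl rfl)))
        (Or.inl ⟨0, rfl⟩) (Or.inr rfl) (Or.inl ⟨t, rfl⟩) (by simp))
  have hB (t : ZMod p) : f (B t) ∈ X := by
    have hline := hf.mem_closure_of_mem_line (L := {A 0, B (0 + t), C t}) (u := A 0) (v := C t)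
      (w := B (0 + t)) (Or.inr (Or.inr (Or.inr ⟨0, t, rfl⟩))) (by simp) (by simp) (by simp)
      (by simp)
    rw [zero_add] at hline
    exact M.closure_subset_closure_of_subset_closure (pair_subset (hA 0) (hC t)) hline
  rintro - ⟨u, rfl⟩
  cases u with
  | A t => exact hA t
  | B t => exact hB t
  | C t => exact hC t
  | V => exact hbase (by simp)

lemma indep_A_B_V (hf : IsLpEmbedding p M f) (i s : ZMod p) :
    M.Indep {f (A i), f (B s), f V} := by
  have hLp : LpIndep p {A i, B s, V} := by
    refine Or.inr ⟨?_, ?_⟩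
    · rw [encard_insert_of_notMem (by simp), encard_pair (by simp)]; rfl
    · rintro L (rfl | rfl | rfl | ⟨i', j', rfl⟩) hsub
      · simpa using hsub (show B s ∈ ({A i, B s, V} : Set (LpPoint p)) by simp)
      · simpa using hsub (show A i ∈ ({A i, B s, V} : Set (LpPoint p)) by simp)
      · simpa using hsub (show A i ∈ ({A i, B s, V} : Set (LpPoint p)) by simp)
      · simpa using hsub (show V ∈ ({A i, B s, V} : Set (LpPoint p)) by simp)
  simpa [image_insert_eq] using (hf.2.2 _).1 hLp

end IsLpEmbedding

lemma IsKeyFamily.mem_lineJI {p : ℕ} {M : Matroid α} {f : LpPoint p → α}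
    {g : ZMod p → ZMod p → α} (hg : IsKeyFamily M f g) (s k : ZMod p) :
    g s k ∈ lineJI M f s 0 := by
  have hmem := mem_iInter.1 ((hg.2.2.1 k 0 s).symm.subset rfl) 0
  simpa using hmem

theorem statement_7_general {α : Type*} (p : ℕ)
    (M : Matroid α) (f : LpPoint p → α) (hf : IsLpEmbedding p M f)
    (g : ZMod p → ZMod p → α) (hg : IsKeyFamily M f g) :
    ∀ i j k : ZMod p, k ≠ 0 →
      eRk M (lineJI M f j i ∪ ({x | ∃ t : ZMod p, x = g t k} ∪ {f V})) = 3 := by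
  intro i j k _
  set U := lineJI M f j i ∪ ({x | ∃ t : ZMod p, x = g t k} ∪ {f V})
  set W : Set α := {f (A 0), f (C 0), f V}
  have hlineJI (j' i' : ZMod p) : lineJI M f j' i' ⊆ M.closure W :=
    hCl_subset_closure ((image_subset_range _ _).trans hf.range_subset_closure)
  have hspan : U ⊆ M.closure W := by
    refine union_subset (hlineJI j i) (union_subset ?_ ?_)
    · rintro - ⟨t, rfl⟩
      exact hlineJI t 0 (hg.mem_lineJI t k)
    · rintro - rfl
      exact hf.range_subset_closure (mem_range_self V)
  have hABV : {f (A i), f (B (i + j)), f V} ⊆ U := by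
    rintro x (rfl | rfl | rfl)
    · exact Or.inl (mem_iUnion.2 ⟨0, mem_image_of_mem f (by simp)⟩)
    · exact Or.inl (mem_iUnion.2 ⟨0, mem_image_of_mem f (by simp)⟩)
    · exact Or.inr (Or.inr rfl)
  rw [eRk_eq_matroid_eRk]
  refine le_antisymm ?_ ?_
  · calc _ ≤ M.eRk (M.closure W) := M.eRk_mono hspan
      _ = M.eRk W := M.eRk_closure_eq W
      _ ≤ W.encard := M.eRk_le_encard W
      _ ≤ 3 := by grw [encard_insert_le, encard_insert_le, encard_singleton]; rfl
  · calc (3 : ℕ∞) = M.eRk {f (A i), f (B (i + j)), f V} := by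
          rw [(hf.indep_A_B_V i (i + j)).eRk_eq_encard,
            encard_insert_of_notMem (by simp [hf.1.eq_iff]), encard_pair (by simp [hf.1.eq_iff])]
          rfl
      _ ≤ _ := M.eRk_mono hABV

theorem statement_7 {α : Type*} (p : ℕ) [Fact p.Prime] (hodd : p ≠ 2)
    (M : Matroid α) (hM : IsHarmonic M) (f : LpPoint p → α) (hf : IsLpEmbedding p M f)
    (g : ZMod p → ZMod p → α) (hg : IsKeyFamily M f g) :
    ∀ i j k : ZMod p, k ≠ 0 →
      eRk M (lineJI M f j i ∪ ({x | ∃ t : ZMod p, x = g t k} ∪ {f V})) = 3 :=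
  statement_7_general p M f hf g hg

end HarmonicPaper
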